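/- For all m-bonsais T_1 and T_2, ∂(T_1 *_1 T_2) = (∂T_1) *_1 T_2 + T_1 *_1 (∂T_2); equivalently, the second deviation T_1 *_2 T_2 = ∂(T_1 *_1 T_2) + (∂T_1) *_1 T_2 + T_1 *_1 (∂T_2) vanishes identically. -/

import Mathlib

/-! Core definitions for (edge-labeled) `m`-bonsais, following Byun,
"A Generalization of Connes-Kreimer Hopf Algebra".

An `m`-bonsai is a finite rooted tree in which every vertex has at most `m`
children and the edges from a vertex to its children carry pairwise distinct
labels from `{1, …, m}` (here modeled by `Fin m`).  We encode such a tree by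
its (finite, prefix-closed) set of vertex-addresses: the address of a vertex
is the list of edge labels on the path from the root to it.  This encoding
builds in both the arity bound and the distinctness of sibling labels. -/

open scoped Classical TensorProduct

structure Bonsai (m : ℕ) where
  verts : Finset (List (Fin m))
  root_mem : ([] : List (Fin m)) ∈ verts
  prefix_closed : ∀ ⦃p q : List (Fin m)⦄, p ∈ verts → q <+: p → q ∈ verts

namespace Bonsai

variable {m : ℕ}

theorem ext' {T U : Bonsai m} (h : T.verts = U.verts) : T = U := by
  cases T; cases U; simp_all

/-- The one-vertex bonsai. -/
def point (m : ℕ) : Bonsai m where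
  verts := {[]}
  root_mem := by simp
  prefix_closed := by
    intro p q hp hq
    simp only [Finset.mem_singleton] at hp ⊢
    subst hp
    exact List.prefix_nil.mp hq

/-- `deg T` is the number of vertices of `T`. -/
def deg (T : Bonsai m) : ℕ := T.verts.card

/-- The subtree of `T` rooted at the vertex (address) `e`. -/
noncomputable def subtreeAt (T : Bonsai m) (e : List (Fin m)) : Bonsai m where
  verts := insert [] ((T.verts.filter (fun p => e <+: p)).image (fun p => p.drop e.length))
  root_mem := by simp
  prefix_closed := by
    intro p q hp hq
    simp only [Finset.mem_insert, Finset.mem_image, Finset.mem_filter] at hp ⊢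
    rcases hp with rfl | ⟨r, ⟨hr, her⟩, rfl⟩
    · left; exact List.prefix_nil.mp hq
    · right
      refine ⟨e ++ q, ⟨T.prefix_closed hr ?_, List.prefix_append e q⟩, by simp⟩
      have : e ++ q <+: e ++ r.drop e.length := (List.prefix_append_right_inj e).mpr hq
      rwa [List.prefix_iff_eq_append.mp her] at this

/-- The set of simple cuts of `T` (including the empty cut).  A simple cut is a
set of edges (an edge is recorded by the address of its child endpoint, hence a
nonempty vertex address) no two of which lie on a common path to the root. -/
noncomputable def cutsSet (T : Bonsai m) : Finset (Finset (List (Fin m))) :=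
  (T.verts.erase []).powerset.filter
    (fun c => ∀ e ∈ c, ∀ e' ∈ c, e <+: e' → e = e')

/-- `R_c(T)`: the trunk (the part containing the root) left after the simple cut `c`. -/
noncomputable def trunk (T : Bonsai m) (c : Finset (List (Fin m))) : Bonsai m where
  verts := insert [] (T.verts.filter (fun p => ∀ e ∈ c, ¬ e <+: p))
  root_mem := by simp
  prefix_closed := by
    intro p q hp hq
    simp only [Finset.mem_insert, Finset.mem_filter] at hp ⊢
    rcases hp with rfl | ⟨hp, hc⟩
    · left; exact List.prefix_nil.mp hq
    · right
      exact ⟨T.prefix_closed hp hq, fun e he hel => hc e he (hel.trans hq)⟩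

/-- `P_c(T)`: the forest (multiset) of branches cut off by the simple cut `c`. -/
noncomputable def branches (T : Bonsai m) (c : Finset (List (Fin m))) :
    Multiset (Bonsai m) := c.val.map T.subtreeAt

end Bonsai

theorem prefix_append_cons {α : Type*} (v r q : List α) (l : α) (hq : q <+: v ++ l :: r) :
    q <+: v ∨ ∃ r', r' <+: r ∧ q = v ++ l :: r' := by
  by_cases h : q.length ≤ v.length
  · exact Or.inl (List.prefix_of_prefix_length_le hq (List.prefix_append v (l :: r)) h)
  · right
    have h1 : v ++ [l] <+: q := by
      apply List.prefix_of_prefix_length_le _ hq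
      · simp; omega
      · have h2 : (v ++ [l]) ++ r = v ++ l :: r := by simp
        exact h2 ▸ List.prefix_append (v ++ [l]) r
    obtain ⟨r', rfl⟩ := h1
    refine ⟨r', ?_, by simp⟩
    have h3 : (v ++ [l]) ++ r' <+: (v ++ [l]) ++ r := by simpa using hq
    exact (List.prefix_append_right_inj (v ++ [l])).mp h3

namespace Bonsai
variable {m : ℕ}

/-- `graft T1 T2 v ℓ`: the `m`-bonsai obtained by joining the root of `T1` to
the vertex `v` of `T2` by one new edge carrying the label `ℓ`. -/
noncomputable def graft (T1 T2 : Bonsai m) (v : List (Fin m)) (l : Fin m) : Bonsai m where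
  verts := (T2.verts ∪ v.inits.toFinset) ∪ T1.verts.image (fun q => v ++ l :: q)
  root_mem := by simp [T2.root_mem]
  prefix_closed := by
    intro p q hp hq
    simp only [Finset.mem_union, Finset.mem_image, List.mem_toFinset, List.mem_inits] at hp ⊢
    rcases hp with (hp | hp) | ⟨r, hr, rfl⟩
    · exact Or.inl (Or.inl (T2.prefix_closed hp hq))
    · exact Or.inl (Or.inr (hq.trans hp))
    · rcases prefix_append_cons v r q l hq with h | ⟨r', hr', rfl⟩
      · exact Or.inl (Or.inr h)
      · exact Or.inr ⟨r', T1.prefix_closed hr hr', rfl⟩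

/-- The labels `ℓ` admissible at the vertex `v` of `T`, i.e. those such that `v`
has no child edge labeled `ℓ`. -/
noncomputable def admissible (T : Bonsai m) (v : List (Fin m)) : Finset (Fin m) :=
  Finset.univ.filter (fun l => v ++ [l] ∉ T.verts)

/-- `n(T1, T2; T)`: the number of one-edge simple cuts `c` of `T` whose cut-off
branch is `T1` and whose remaining trunk is `T2`. -/
noncomputable def nCount (T1 T2 T : Bonsai m) : ℕ :=
  ((T.verts.erase []).filter
    (fun e => T.subtreeAt e = T1 ∧ Bonsai.trunk T {e} = T2)).card

end Bonsai

section FreeModule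

variable (k : Type) [Field k] (m : ℕ)

/-- The free `k`-vector space `L` on the set of `m`-bonsais, with basis `{Z_T}`. -/
abbrev BonsaiMod (k : Type) [Field k] (m : ℕ) := Bonsai m →₀ k

/-- The basis vector `Z_T`. -/
noncomputable def zb {m : ℕ} (T : Bonsai m) : BonsaiMod k m := Finsupp.single T 1

/-- The appending operation on basis vectors:
`Z_{T1} * Z_{T2} = Σ_T n(T1,T2;T) Z_T`, equivalently the sum of all bonsais
obtained by joining the root of `T1` to some vertex of `T2` by one new edge
carrying an admissible label. -/
noncomputable def appB {m : ℕ} (T1 T2 : Bonsai m) : BonsaiMod k m :=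
  ∑ v ∈ T2.verts, ∑ l ∈ Bonsai.admissible T2 v,
    Finsupp.single (Bonsai.graft T1 T2 v l) 1

/-- The bilinear extension of the appending operation `*` to `L`. -/
noncomputable def appLin : BonsaiMod k m →ₗ[k] BonsaiMod k m →ₗ[k] BonsaiMod k m :=
  Finsupp.lsum k (fun T1 => LinearMap.toSpanSingleton k _
    (Finsupp.lsum k (fun T2 => LinearMap.toSpanSingleton k (BonsaiMod k m) (appB k T1 T2))))

end FreeModule

namespace Bonsai
variable {m : ℕ}

/-- The non-tip vertices of `T`: a vertex is a tip iff it has no children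
(equivalently, iff it is a non-root vertex incident to exactly one edge, or `T`
is the one-vertex bonsai). -/
noncomputable def nonTips (T : Bonsai m) : Finset (List (Fin m)) :=
  T.verts.filter (fun v => ∃ l : Fin m, v ++ [l] ∈ T.verts)

/-- The tips of `T`. -/
noncomputable def tips (T : Bonsai m) : Finset (List (Fin m)) :=
  T.verts.filter (fun v => ¬ ∃ l : Fin m, v ++ [l] ∈ T.verts)

/-- Attaching one new pendant edge with label `l` at the vertex `v` of `T`. -/
noncomputable def attachEdge (T : Bonsai m) (v : List (Fin m)) (l : Fin m) : Bonsai m :=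
  Bonsai.graft (Bonsai.point m) T v l

end Bonsai

section CharTwo

variable (k : Type) [Field k] (m : ℕ)

/-- The vertex-appending differential mod 2:
`∂T = Σ T'`, summed over all `m`-bonsais `T'` obtained from `T` by attaching one
new edge, with an admissible label, to a vertex of `T` that is not a tip. -/
noncomputable def del2Val (T : Bonsai m) : BonsaiMod k m :=
  ∑ v ∈ Bonsai.nonTips T, ∑ l ∈ Bonsai.admissible T v,
    Finsupp.single (Bonsai.attachEdge T v l) 1

/-- The mod-2 vertex-appending differential, extended linearly. -/
noncomputable def del2Map : BonsaiMod k m →ₗ[k] BonsaiMod k m :=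
  Finsupp.lsum k (fun T => LinearMap.toSpanSingleton k (BonsaiMod k m) (del2Val k m T))

/-- The first deviation of the appending operation `*`:
`T1 *₁ T2 = ∂(T1 * T2) + (∂T1) * T2 + T1 * (∂T2)` (coefficients mod 2). -/
noncomputable def dev1 (T1 T2 : Bonsai m) : BonsaiMod k m :=
  del2Map k m (appB k T1 T2)
    + appLin k m (del2Val k m T1) (zb k T2)
    + appLin k m (zb k T1) (del2Val k m T2)

end CharTwo

/-- The bilinear extension of the first deviation `*₁` to `L`. -/
noncomputable def dev1Lin (k : Type) [Field k] (m : ℕ) :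
    BonsaiMod k m →ₗ[k] BonsaiMod k m →ₗ[k] BonsaiMod k m :=
  Finsupp.lsum k (fun T1 => LinearMap.toSpanSingleton k _
    (Finsupp.lsum k (fun T2 =>
      LinearMap.toSpanSingleton k (BonsaiMod k m) (dev1 k m T1 T2))))


section AuxProof

open Bonsai

variable {m : ℕ}

lemma append_singleton_eq_iff {v w : List (Fin m)} {l l' : Fin m} :
    w ++ [l'] = v ++ [l] ↔ w = v ∧ l' = l := by
  constructor
  · intro h
    obtain ⟨h1, h2⟩ := List.append_inj' h rfl
    simp only [List.cons.injEq, and_true] at h2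
    exact ⟨h1, h2⟩
  · rintro ⟨rfl, rfl⟩; rfl

lemma verts_attachEdge {T : Bonsai m} {v : List (Fin m)} (hv : v ∈ T.verts) (l : Fin m) :
    (T.attachEdge v l).verts = insert (v ++ [l]) T.verts := by
  ext p
  simp only [Bonsai.attachEdge, Bonsai.graft, Bonsai.point, Finset.mem_union,
    Finset.mem_image, List.mem_toFinset, List.mem_inits, Finset.mem_singleton,
    Finset.mem_insert]
  constructor
  · rintro ((h | h) | ⟨q, rfl, rfl⟩)
    · exact Or.inr h
    · exact Or.inr (T.prefix_closed hv h)
    · exact Or.inl rfl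
  · rintro (rfl | h)
    · exact Or.inr ⟨[], rfl, rfl⟩
    · exact Or.inl (Or.inl h)

lemma mem_verts_of_mem_nonTips {T : Bonsai m} {v : List (Fin m)} (hv : v ∈ T.nonTips) :
    v ∈ T.verts := (Finset.mem_filter.mp hv).1

lemma not_mem_of_admissible {T : Bonsai m} {v : List (Fin m)} {l : Fin m}
    (hl : l ∈ T.admissible v) : v ++ [l] ∉ T.verts := by
  simpa [Bonsai.admissible] using hl

lemma nonTips_attachEdge {T : Bonsai m} {v : List (Fin m)} {l : Fin m}
    (hv : v ∈ T.nonTips) (hl : l ∈ T.admissible v) :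
    (T.attachEdge v l).nonTips = T.nonTips := by
  have hv' : v ∈ T.verts := mem_verts_of_mem_nonTips hv
  have hnl : v ++ [l] ∉ T.verts := not_mem_of_admissible hl
  ext w
  simp only [Bonsai.nonTips, Finset.mem_filter, verts_attachEdge hv', Finset.mem_insert]
  constructor
  · rintro ⟨rfl | hw, l'', h | h⟩
    · exfalso
      have := congrArg List.length h
      simp at this
    · exact absurd (T.prefix_closed h ⟨[l''], rfl⟩) hnl
    · obtain ⟨rfl, rfl⟩ := append_singleton_eq_iff.mp h
      exact ⟨hv', (Finset.mem_filter.mp hv).2⟩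
    · exact ⟨hw, l'', h⟩
  · rintro ⟨hw, l'', h⟩
    exact ⟨Or.inr hw, l'', Or.inr h⟩

lemma admissible_attachEdge {T : Bonsai m} {v : List (Fin m)} (hv : v ∈ T.verts) (l : Fin m)
    (w : List (Fin m)) (l' : Fin m) :
    l' ∈ (T.attachEdge v l).admissible w ↔ l' ∈ T.admissible w ∧ ¬(w = v ∧ l' = l) := by
  simp only [Bonsai.admissible, Finset.mem_filter, Finset.mem_univ, true_and,
    verts_attachEdge hv, Finset.mem_insert, append_singleton_eq_iff]
  tauto

lemma attachEdge_comm {T : Bonsai m} {v v' : List (Fin m)} (hv : v ∈ T.verts)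
    (hv' : v' ∈ T.verts) (l l' : Fin m) :
    (T.attachEdge v l).attachEdge v' l' = (T.attachEdge v' l').attachEdge v l := by
  apply Bonsai.ext'
  have h1 : v' ∈ (T.attachEdge v l).verts := by
    rw [verts_attachEdge hv]; exact Finset.mem_insert_of_mem hv'
  have h2 : v ∈ (T.attachEdge v' l').verts := by
    rw [verts_attachEdge hv']; exact Finset.mem_insert_of_mem hv
  rw [verts_attachEdge h1, verts_attachEdge hv, verts_attachEdge h2, verts_attachEdge hv',
    Finset.insert_comm]

end AuxProof

section AuxProof2

open Bonsai

variable (k : Type) [Field k] (m : ℕ)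

lemma del2Map_single (T : Bonsai m) (c : k) :
    del2Map k m (Finsupp.single T c) = c • del2Val k m T := by
  rw [del2Map, Finsupp.lsum_single, LinearMap.toSpanSingleton_apply]

lemma appLin_single (T1 T2 : Bonsai m) (c c' : k) :
    appLin k m (Finsupp.single T1 c) (Finsupp.single T2 c') = c • c' • appB k T1 T2 := by
  rw [appLin, Finsupp.lsum_single, LinearMap.toSpanSingleton_apply, LinearMap.smul_apply,
    Finsupp.lsum_single, LinearMap.toSpanSingleton_apply]

lemma dev1Lin_single (T1 T2 : Bonsai m) (c c' : k) :
    dev1Lin k m (Finsupp.single T1 c) (Finsupp.single T2 c') = c • c' • dev1 k m T1 T2 := by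
  rw [dev1Lin, Finsupp.lsum_single, LinearMap.toSpanSingleton_apply, LinearMap.smul_apply,
    Finsupp.lsum_single, LinearMap.toSpanSingleton_apply]

variable [CharP k 2]

lemma bm_add_self (x : BonsaiMod k m) : x + x = 0 := by
  have h2 : (2 : k) = 0 := by exact_mod_cast CharP.cast_eq_zero k 2
  rw [← two_smul k x, h2, zero_smul]

lemma del2Map_del2Val (T : Bonsai m) :
    del2Map k m (del2Val k m T) = 0 := by
  classical
  set A : Finset (List (Fin m) × Fin m) :=
    (T.nonTips ×ˢ (Finset.univ : Finset (Fin m))).filter (fun p => p.2 ∈ T.admissible p.1)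
    with hA
  have hmemA : ∀ p : List (Fin m) × Fin m,
      p ∈ A ↔ p.1 ∈ T.nonTips ∧ p.2 ∈ T.admissible p.1 := by
    intro p
    simp [hA, Finset.mem_filter, Finset.mem_product]
  have h1 : del2Val k m T = ∑ p ∈ A, Finsupp.single (T.attachEdge p.1 p.2) (1 : k) := by
    rw [del2Val]
    exact (Finset.sum_finset_product A T.nonTips (fun v => T.admissible v) hmemA
      (f := fun p => Finsupp.single (T.attachEdge p.1 p.2) (1 : k))).symm
  have hsing : ∀ U : Bonsai m,
      del2Map k m (Finsupp.single U (1 : k)) = del2Val k m U := by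
    intro U; rw [del2Map_single, one_smul]
  have h2 : ∀ p ∈ A, del2Val k m (T.attachEdge p.1 p.2)
      = ∑ q ∈ A.erase p,
          Finsupp.single ((T.attachEdge p.1 p.2).attachEdge q.1 q.2) (1 : k) := by
    intro p hp
    obtain ⟨hp1, hp2⟩ := (hmemA p).mp hp
    rw [del2Val, nonTips_attachEdge hp1 hp2]
    refine (Finset.sum_finset_product (A.erase p) T.nonTips
      (fun v => (T.attachEdge p.1 p.2).admissible v) ?_
      (f := fun q => Finsupp.single ((T.attachEdge p.1 p.2).attachEdge q.1 q.2) (1 : k))).symm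
    intro q
    rw [Finset.mem_erase, hmemA, admissible_attachEdge (mem_verts_of_mem_nonTips hp1) p.2,
      Ne, Prod.ext_iff]
    tauto
  rw [h1, map_sum]
  simp only [hsing]
  rw [Finset.sum_congr rfl h2]
  set B : Finset ((List (Fin m) × Fin m) × (List (Fin m) × Fin m)) :=
    (A ×ˢ A).filter (fun x => x.1 ≠ x.2) with hB
  have hmemB : ∀ x : (List (Fin m) × Fin m) × (List (Fin m) × Fin m),
      x ∈ B ↔ x.1 ∈ A ∧ x.2 ∈ A.erase x.1 := by
    intro x
    simp only [hB, Finset.mem_filter, Finset.mem_product, Finset.mem_erase]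
    constructor
    · rintro ⟨⟨ha, hb⟩, hne⟩
      exact ⟨ha, fun h => hne h.symm, hb⟩
    · rintro ⟨ha, hne, hb⟩
      exact ⟨⟨ha, hb⟩, fun h => hne h.symm⟩
  rw [← Finset.sum_finset_product B A (fun p => A.erase p) hmemB
    (f := fun x => Finsupp.single ((T.attachEdge x.1.1 x.1.2).attachEdge x.2.1 x.2.2) (1 : k))]
  refine Finset.sum_involution (fun x _ => x.swap) ?_ ?_ ?_ ?_
  · intro x hx
    have hx1 := (hmemA x.1).mp (((hmemB x).mp hx).1)
    have hx2 := (hmemA x.2).mp (Finset.mem_of_mem_erase ((hmemB x).mp hx).2)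
    rw [Prod.fst_swap, Prod.snd_swap,
      attachEdge_comm (mem_verts_of_mem_nonTips hx1.1) (mem_verts_of_mem_nonTips hx2.1)]
    exact bm_add_self k m _
  · intro x hx _
    have hne : x.1 ≠ x.2 := by
      have := (hmemB x).mp hx
      exact fun h => (Finset.mem_erase.mp this.2).1 h.symm
    intro h
    apply hne
    have := congrArg Prod.fst h
    rw [Prod.fst_swap] at this
    exact this.symm
  · intro x hx
    have hx' := hx
    rw [hB, Finset.mem_filter, Finset.mem_product] at hx'
    show x.swap ∈ B
    rw [hB, Finset.mem_filter, Finset.mem_product]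
    exact ⟨⟨hx'.1.2, hx'.1.1⟩, fun h => hx'.2 h.symm⟩
  · intro x _
    exact Prod.swap_swap x

lemma del2Map_del2Map (x : BonsaiMod k m) :
    del2Map k m (del2Map k m x) = 0 := by
  induction x using Finsupp.induction_linear with
  | zero => simp
  | add f g hf hg => rw [map_add, map_add, hf, hg, add_zero]
  | single T c =>
      rw [del2Map_single, map_smul, del2Map_del2Val, smul_zero]

omit [CharP k 2] in
lemma dev1Lin_eq (x y : BonsaiMod k m) :
    dev1Lin k m x y
      = del2Map k m (appLin k m x y) + appLin k m (del2Map k m x) y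
        + appLin k m x (del2Map k m y) := by
  induction x using Finsupp.induction_linear with
  | zero => simp
  | add f g hf hg =>
      simp only [map_add, LinearMap.add_apply] at *
      rw [hf, hg]; abel
  | single T1 c =>
      induction y using Finsupp.induction_linear with
      | zero => simp
      | add f g hf hg =>
          simp only [map_add, LinearMap.add_apply] at *
          rw [hf, hg]; abel
      | single T2 c' =>
          have hz : ∀ T : Bonsai m, zb k T = Finsupp.single T (1 : k) := fun _ => rfl
          have e1 : (Finsupp.single T1 c : BonsaiMod k m) = c • zb k T1 := by
            rw [hz, Finsupp.smul_single, smul_eq_mul, mul_one]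
          have e2 : (Finsupp.single T2 c' : BonsaiMod k m) = c' • zb k T2 := by
            rw [hz, Finsupp.smul_single, smul_eq_mul, mul_one]
          have h0 : dev1Lin k m (zb k T1) (zb k T2) = dev1 k m T1 T2 := by
            rw [hz, hz, dev1Lin_single, one_smul, one_smul]
          have hap : appLin k m (zb k T1) (zb k T2) = appB k T1 T2 := by
            rw [hz, hz, appLin_single, one_smul, one_smul]
          have hd : ∀ T : Bonsai m, del2Map k m (zb k T) = del2Val k m T := by
            intro T; rw [hz, del2Map_single, one_smul]
          have key : dev1 k m T1 T2
              = del2Map k m (appLin k m (zb k T1) (zb k T2))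
                + appLin k m (del2Map k m (zb k T1)) (zb k T2)
                + appLin k m (zb k T1) (del2Map k m (zb k T2)) := by
            rw [hap, hd, hd, dev1]
          rw [e1, e2]
          simp only [map_smul, LinearMap.smul_apply, h0, key, smul_add]

end AuxProof2

/-- **STATEMENT 13.** Over a field of characteristic 2, for all `m`-bonsais
`T1`, `T2`: `∂(T1 *₁ T2) = (∂T1) *₁ T2 + T1 *₁ (∂T2)`; equivalently, the second
deviation `T1 *₂ T2 = ∂(T1 *₁ T2) + (∂T1) *₁ T2 + T1 *₁ (∂T2)` vanishes
identically. -/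
theorem dev2_vanishes (k : Type) [Field k] [CharP k 2] (m : ℕ)
    (T1 T2 : Bonsai m) :
    del2Map k m (dev1 k m T1 T2)
      = dev1Lin k m (del2Val k m T1) (zb k T2)
        + dev1Lin k m (zb k T1) (del2Val k m T2) := by
  have hz : ∀ T : Bonsai m, zb k T = Finsupp.single T (1 : k) := fun _ => rfl
  have hd : ∀ T : Bonsai m, del2Map k m (zb k T) = del2Val k m T := by
    intro T; rw [hz, del2Map_single, one_smul]
  have hap : appLin k m (zb k T1) (zb k T2) = appB k T1 T2 := by
    rw [hz, hz, appLin_single, one_smul, one_smul]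
  rw [dev1Lin_eq, dev1Lin_eq]
  rw [del2Map_del2Val, del2Map_del2Val, hd, hd]
  simp only [map_zero, LinearMap.zero_apply, add_zero, zero_add]
  rw [dev1, map_add, map_add, ← hap, del2Map_del2Map]
  have hself := bm_add_self k m (appLin k m (del2Val k m T1) (del2Val k m T2))
  rw [zero_add]
  conv_rhs => rw [add_add_add_comm, hself, add_zero]
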